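/- arXiv:1602.04063 — 2 statements merged into one kernel-verified Lean document; each statement's English description precedes it below -/
import Mathlib

section
/- Let V be a finite-dimensional vector space over a field, and N a nilpotent endomorphism of V with N ≠ 0 and N^2 = 0. Then the induced endomorphism N∧ of ∧²V given by N∧(v∧w) = Nv∧w + v∧Nw satisfies: if dim(image of N) = 1 then (N∧)^2 = 0, and if dim(image of N) = 2 then (N∧)^2 ≠ 0 and (N∧)^3 = 0. -/
open ExteriorAlgebra

/-- The wedge `v ∧ w` of two vectors, as an element of the second exterior power `⋀²V`. -/
noncomputable def wedge2 {K : Type} [Field K] {V : Type} [AddCommGroup V] [Module K V]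
    (v w : V) : ⋀[K]^2 V :=
  ⟨ιMulti K 2 ![v, w], ιMulti_range K 2 (Set.mem_range_self _)⟩

/-!
Because `N² = 0`, expanding the Leibniz rule twice gives `D²(v ∧ w) = 2 • (Nv ∧ Nw)` and
`D(Nv ∧ Nw) = 0`, so `D³ = 0` always. As `2 ≠ 0` and a wedge vanishes exactly on linearly
dependent pairs, `D² = 0` holds precisely when no two vectors of `im N` are independent, that is,
when `dim (im N) ≤ 1`.
-/

section Wedge2

variable {K : Type} [Field K] {V : Type} [AddCommGroup V] [Module K V]

theorem wedge2_eq_ιMulti (v w : V) : wedge2 (K := K) v w = exteriorPower.ιMulti K 2 ![v, w] :=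
  rfl

theorem wedge2_eq_zero_iff {v w : V} :
    wedge2 (K := K) v w = 0 ↔ ¬LinearIndependent K ![v, w] := by
  refine ⟨fun h hli => ?_, fun h => (exteriorPower.ιMulti K 2).map_linearDependent _ h⟩
  -- The family of 2-fold wedges of `![v, w]` has the single member `v ∧ w`.
  refine (exteriorPower.ιMulti_family_linearIndependent_field 2 hli).ne_zero
    ⟨Finset.univ, by simp⟩ ?_
  rwa [exteriorPower.ιMulti_family, (Set.powersetCard.ofFinEmbEquiv.symm _).strictMono.eq_id,
    Function.comp_id]

theorem wedge2_zero_left (w : V) : wedge2 (K := K) 0 w = 0 :=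
  (exteriorPower.ιMulti K 2).map_coord_zero 0 rfl

theorem wedge2_zero_right (v : V) : wedge2 (K := K) v 0 = 0 :=
  (exteriorPower.ιMulti K 2).map_coord_zero 1 rfl

theorem wedge2_linearMap_ext {W : Type} [AddCommGroup W] [Module K W]
    {f g : ⋀[K]^2 V →ₗ[K] W} (h : ∀ v w, f (wedge2 v w) = g (wedge2 v w)) : f = g := by
  ext m
  have hm : ![m 0, m 1] = m := by ext i; fin_cases i <;> rfl
  simpa [wedge2_eq_ιMulti, hm] using h (m 0) (m 1)

end Wedge2

section Rank

variable {K V W : Type*} [Field K] [AddCommGroup V] [Module K V] [AddCommGroup W] [Module K W]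

theorem LinearIndependent.card_le_finrank_of_forall_mem {ι : Type*} [Fintype ι] {b : ι → V}
    {p : Submodule K V} [Module.Finite K p] (hb : LinearIndependent K b) (hp : ∀ i, b i ∈ p) :
    Fintype.card ι ≤ Module.finrank K p :=
  finrank_span_eq_card hb ▸
    Submodule.finrank_mono (Submodule.span_le.2 (Set.range_subset_iff.2 hp))

theorem LinearMap.exists_linearIndependent_comp_of_finrank_range_eq (f : V →ₗ[K] W)
    [Module.Finite K (LinearMap.range f)] {n : ℕ} (h : Module.finrank K (LinearMap.range f) = n) :
    ∃ a : Fin n → V, LinearIndependent K (f ∘ a) := by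
  let B := Module.finBasisOfFinrankEq K _ h
  choose a ha using fun i => (B i).2
  refine ⟨a, ?_⟩
  rw [show f ∘ a = (LinearMap.range f).subtype ∘ B from funext ha]
  exact B.linearIndependent.map' _ (Submodule.ker_subtype _)

end Rank

def IsWedge2Derivation {K : Type} [Field K] {V : Type} [AddCommGroup V] [Module K V]
    (N : V →ₗ[K] V) (D : ⋀[K]^2 V →ₗ[K] ⋀[K]^2 V) : Prop :=
  ∀ v w, D (wedge2 v w) = wedge2 (N v) w + wedge2 v (N w)

namespace IsWedge2Derivation

variable {K : Type} [Field K] {V : Type} [AddCommGroup V] [Module K V]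
  {N : V →ₗ[K] V} {D : ⋀[K]^2 V →ₗ[K] ⋀[K]^2 V}

theorem apply_wedge2_apply_apply_eq_zero (hD : IsWedge2Derivation N D) (hN : N ∘ₗ N = 0)
    (v w : V) : D (wedge2 (N v) (N w)) = 0 := by
  have hNN (u : V) : N (N u) = 0 := LinearMap.congr_fun hN u
  rw [hD, hNN, hNN, wedge2_zero_left, wedge2_zero_right, add_zero]

theorem apply_apply_wedge2 (hD : IsWedge2Derivation N D) (hN : N ∘ₗ N = 0) (v w : V) :
    D (D (wedge2 v w)) = (2 : K) • wedge2 (N v) (N w) := by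
  have hNN (u : V) : N (N u) = 0 := LinearMap.congr_fun hN u
  rw [hD v w, map_add, hD, hD, hNN, hNN, wedge2_zero_left, wedge2_zero_right, zero_add, add_zero,
    two_smul]

theorem comp_comp_eq_zero (hD : IsWedge2Derivation N D) (hN : N ∘ₗ N = 0) :
    D ∘ₗ D ∘ₗ D = 0 :=
  wedge2_linearMap_ext fun v w => by
    rw [LinearMap.comp_apply, LinearMap.comp_apply, hD.apply_apply_wedge2 hN, map_smul,
      hD.apply_wedge2_apply_apply_eq_zero hN, smul_zero, LinearMap.zero_apply]

theorem comp_eq_zero_of_finrank_range_le_one (hD : IsWedge2Derivation N D) (hN : N ∘ₗ N = 0)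
    [Module.Finite K (LinearMap.range N)] (hr : Module.finrank K (LinearMap.range N) ≤ 1) :
    D ∘ₗ D = 0 :=
  wedge2_linearMap_ext fun v w => by
    rw [LinearMap.comp_apply, hD.apply_apply_wedge2 hN, LinearMap.zero_apply,
      wedge2_eq_zero_iff.2 fun hli => ?_, smul_zero]
    have := hli.card_le_finrank_of_forall_mem (p := LinearMap.range N)
      (fun i => by fin_cases i <;> exact LinearMap.mem_range_self N _)
    rw [Fintype.card_fin] at this
    omega

theorem comp_ne_zero_of_finrank_range_eq_two (hD : IsWedge2Derivation N D) (hN : N ∘ₗ N = 0)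
    (hchar : (2 : K) ≠ 0) [Module.Finite K (LinearMap.range N)]
    (hr : Module.finrank K (LinearMap.range N) = 2) : D ∘ₗ D ≠ 0 := by
  obtain ⟨a, ha⟩ := N.exists_linearIndependent_comp_of_finrank_range_eq hr
  have hpair : LinearIndependent K ![N (a 0), N (a 1)] := by
    convert ha using 1
    ext i; fin_cases i <;> rfl
  intro hDD
  have h := LinearMap.congr_fun hDD (wedge2 (a 0) (a 1))
  rw [LinearMap.comp_apply, hD.apply_apply_wedge2 hN, LinearMap.zero_apply] at h
  exact smul_ne_zero hchar (mt wedge2_eq_zero_iff.1 (not_not.2 hpair)) h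

end IsWedge2Derivation

theorem derivation_extension_nilpotency_of_sq_zero_general
    {K : Type} [Field K] (hchar : (2 : K) ≠ 0)
    {V : Type} [AddCommGroup V] [Module K V]
    (N : V →ₗ[K] V) (hN2 : N ∘ₗ N = 0)
    (D : ⋀[K]^2 V →ₗ[K] ⋀[K]^2 V)
    (hD : ∀ v w : V, D (wedge2 v w) = wedge2 (N v) w + wedge2 v (N w)) :
    (Module.finrank K (LinearMap.range N) = 1 → D ∘ₗ D = 0) ∧
    (Module.finrank K (LinearMap.range N) = 2 →
      D ∘ₗ D ≠ 0 ∧ D ∘ₗ D ∘ₗ D = 0) := by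
  have hD : IsWedge2Derivation N D := hD
  refine ⟨fun hr => ?_, fun hr => ?_⟩
  · have := Module.finite_of_finrank_eq_succ hr
    exact hD.comp_eq_zero_of_finrank_range_le_one hN2 hr.le
  · have := Module.finite_of_finrank_eq_succ hr
    exact ⟨hD.comp_ne_zero_of_finrank_range_eq_two hN2 hchar hr, hD.comp_comp_eq_zero hN2⟩

/-- Let `V` be a finite-dimensional vector space over a field (of
characteristic `≠ 2`), and `N` a nilpotent endomorphism of `V` with `N ≠ 0` and `N² = 0`.
Then the induced endomorphism `N∧` of `⋀²V` given by `N∧(v∧w) = Nv∧w + v∧Nw` satisfies: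
if `dim (im N) = 1` then `(N∧)² = 0`, and if `dim (im N) = 2` then `(N∧)² ≠ 0` and
`(N∧)³ = 0`. -/
theorem derivation_extension_nilpotency_of_sq_zero
    {K : Type} [Field K] (hchar : (2 : K) ≠ 0)
    {V : Type} [AddCommGroup V] [Module K V] [FiniteDimensional K V]
    (N : V →ₗ[K] V) (hN0 : N ≠ 0) (hN2 : N ∘ₗ N = 0)
    (D : ⋀[K]^2 V →ₗ[K] ⋀[K]^2 V)
    (hD : ∀ v w : V, D (wedge2 v w) = wedge2 (N v) w + wedge2 v (N w)) :
    (Module.finrank K (LinearMap.range N) = 1 → D ∘ₗ D = 0) ∧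
    (Module.finrank K (LinearMap.range N) = 2 →
      D ∘ₗ D ≠ 0 ∧ D ∘ₗ D ∘ₗ D = 0) :=
  derivation_extension_nilpotency_of_sq_zero_general hchar N hN2 D hD
end

section
/- Let A be the ring k[x_0,...,x_d]/(x_0 ⋯ x_r) over a field k. For each subset I ⊆ {0,...,r}, let A_I = k[x_0,...,x_d]/(x_i : i ∈ I). Then the Čech-type complex 0 → A → ⊕_{|I|=1} A_I → ⊕_{|I|=2} A_I → ⋯ → A_{{0,...,r}} → 0, with differentials the alternating sums of the natural quotient maps, is exact. -/
open MvPolynomial DirectSum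

noncomputable section

variable (k : Type) [Field k] (d r : ℕ)

/-- The set of indices `{0, ..., r}` inside `Fin (d+1)`. -/
def sncIdxSet : Finset (Fin (d + 1)) := Finset.univ.filter (fun i => (i : ℕ) ≤ r)

/-- The ideal `(x_i : i ∈ I)` of `k[x_0, ..., x_d]`. -/
def sncIdeal (I : Finset (Fin (d + 1))) : Ideal (MvPolynomial (Fin (d + 1)) k) :=
  Ideal.span ((fun i => (X i : MvPolynomial (Fin (d + 1)) k)) '' ↑I)

/-- The quotient ring `A_I = k[x_0, ..., x_d] / (x_i : i ∈ I)`. -/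
abbrev sncStratum (I : Finset (Fin (d + 1))) : Type :=
  MvPolynomial (Fin (d + 1)) k ⧸ sncIdeal k d I

/-- The ring `A = k[x_0, ..., x_d] / (x_0 ⋯ x_r)`. -/
abbrev sncTotal : Type :=
  MvPolynomial (Fin (d + 1)) k ⧸
    (Ideal.span {∏ i ∈ sncIdxSet d r, (X i : MvPolynomial (Fin (d + 1)) k)})

/-- The index type for the degree-`s` term of the complex: subsets `I ⊆ {0, ..., r}` with
`|I| = s + 1`. -/
def sncIdx (s : ℕ) : Type :=
  {I : Finset (Fin (d + 1)) // I ⊆ sncIdxSet d r ∧ I.card = s + 1}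

instance (s : ℕ) : DecidableEq (sncIdx d r s) := Subtype.instDecidableEq

/-- The degree-`s` term `⊕_{|I| = s+1} A_I` of the complex. -/
abbrev sncComplexTerm (s : ℕ) : Type :=
  ⨁ (I : sncIdx d r s), sncStratum k d I.1

/-- The sign `(-1)^(number of elements of `I` smaller than `j`)`. -/
def sncSign (I : Finset (Fin (d + 1))) (j : Fin (d + 1)) : ℤ :=
  (-1) ^ (I.filter (fun i => i < j)).card

/-- The differential `d^s : ⊕_{|I| = s+1} A_I → ⊕_{|J| = s+2} A_J`, given by the alternating
sums of the canonical quotient maps `A_I → A_{I ∪ {j}}`. -/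
def sncDifferential (s : ℕ) : sncComplexTerm k d r s →+ sncComplexTerm k d r (s + 1) :=
  DirectSum.toAddMonoid fun I : sncIdx d r s =>
    ∑ j ∈ (sncIdxSet d r \ I.1).attach,
      sncSign d I.1 j.1 •
        (DirectSum.of (fun J : sncIdx d r (s + 1) => sncStratum k d J.1)
            ⟨insert j.1 I.1,
              ⟨Finset.insert_subset (Finset.mem_sdiff.mp j.2).1 I.2.1, by
                rw [Finset.card_insert_of_notMem (Finset.mem_sdiff.mp j.2).2, I.2.2]⟩⟩).comp
          (Ideal.Quotient.factor
              (Ideal.span_mono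
                (Set.image_mono (Finset.coe_subset.mpr
                  (Finset.subset_insert j.1 I.1))))).toAddMonoidHom

/-- The augmentation map `A → ⊕_{i ∈ {0,...,r}} A_{{i}}`, whose components are the canonical
quotient maps. -/
def sncAugmentation : sncTotal k d r →+ sncComplexTerm k d r 0 :=
  ∑ i ∈ (sncIdxSet d r).attach,
    (DirectSum.of (fun J : sncIdx d r 0 => sncStratum k d J.1)
        ⟨{i.1}, ⟨Finset.singleton_subset_iff.mpr i.2, Finset.card_singleton _⟩⟩).comp
      (Ideal.Quotient.factor (by
          rw [Ideal.span_le, Set.singleton_subset_iff, SetLike.mem_coe]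
          have hx : (X i.1 : MvPolynomial (Fin (d + 1)) k) ∈ sncIdeal k d {i.1} :=
            Ideal.subset_span ⟨i.1, by simp, rfl⟩
          rw [← Finset.mul_prod_erase _ _ i.2]
          exact Ideal.mul_mem_right _ _ hx)).toAddMonoidHom

/-!
Everything is graded by monomials `x^m`. The monomial `x^m` survives in `A_I` exactly when
`m i = 0` for all `i ∈ I`, so the degree-`m` part of the complex is the augmented cochain complex
of the full simplex on `S(m) = {i ≤ r | m i = 0}`; moreover `x^m = 0` in `A` exactly when
`S(m) = ∅`. Coning off from a vertex `v ∈ S(m)`, i.e. `e_I ↦ ±e_{I \ {v}}` when `v ∈ I`, is a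
contracting homotopy of that simplex. These cones assemble into `k`-linear maps `h` with
`h ∘ ε = id`, `ε ∘ h + h ∘ d = id` and `d ∘ h + h ∘ d = id`, where `ε` is the augmentation,
which gives exactness.
-/

theorem Function.Exact.of_homotopy {A B C : Type*} [AddZeroClass B] [Zero C]
    {f : A → B} {g : B → C} (hgf : ∀ a, g (f a) = 0) (h : B → A) (h' : C → B)
    (h'0 : h' 0 = 0) (hh : ∀ b, f (h b) + h' (g b) = b) : Function.Exact f g :=
  .of_comp_of_mem_range (funext hgf) fun b hb => ⟨h b, by simpa [hb, h'0] using hh b⟩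

theorem Finset.sum_sum_erase_eq_zero {α M : Type*} [DecidableEq α] [AddCommMonoid M]
    (u : Finset α) (g : α → α → M)
    (hg : ∀ i ∈ u, ∀ j ∈ u, i ≠ j → g i j + g j i = 0) :
    ∑ i ∈ u, ∑ j ∈ u.erase i, g i j = 0 := by
  rw [Finset.sum_sigma']
  refine Finset.sum_involution (fun x _ => ⟨x.2, x.1⟩) (fun x hx => ?_) (fun x hx _ => ?_)
    (fun x hx => ?_) (fun _ _ => rfl)
  all_goals simp only [Finset.mem_sigma, Finset.mem_erase] at hx
  · exact hg _ hx.1 _ hx.2.2 hx.2.1.symm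
  · exact fun h => hx.2.1 (congrArg Sigma.fst h)
  · simpa using ⟨hx.2.2, hx.2.1.symm, hx.1⟩

namespace MvPolynomial

variable {σ R M : Type*} [CommRing R] [AddCommGroup M] [Module R M]

theorem basisMonomials_constr_monomial (g : (σ →₀ ℕ) → M) (m : σ →₀ ℕ) (c : R) :
    (basisMonomials σ R).constr R g (monomial m c) = c • g m := by
  have : (monomial m c : MvPolynomial σ R) = c • basisMonomials σ R m := by
    rw [coe_basisMonomials, smul_monomial, smul_eq_mul, mul_one]
  rw [this, map_smul, Module.Basis.constr_basis]

theorem basisMonomials_constr_eq_zero (s : Set σ) (g : (σ →₀ ℕ) → M)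
    (hg : ∀ m, ∀ i ∈ s, m i ≠ 0 → g m = 0) {p : MvPolynomial σ R}
    (hp : p ∈ Ideal.span (X '' s)) : (basisMonomials σ R).constr R g p = 0 := by
  rw [mem_ideal_span_X_image] at hp
  rw [p.as_sum, map_sum]
  refine Finset.sum_eq_zero fun m hm => ?_
  obtain ⟨i, hi, hmi⟩ := hp m hm
  rw [basisMonomials_constr_monomial, hg m i hi hmi, smul_zero]

def quotientSpanXLift (s : Set σ) (g : (σ →₀ ℕ) → M)
    (hg : ∀ m, ∀ i ∈ s, m i ≠ 0 → g m = 0) :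
    (MvPolynomial σ R ⧸ Ideal.span (X '' s : Set (MvPolynomial σ R))) →ₗ[R] M :=
  Submodule.liftQ ((Ideal.span (X '' s : Set (MvPolynomial σ R))).restrictScalars R)
      ((basisMonomials σ R).constr R g)
      (fun _ hp => basisMonomials_constr_eq_zero s g hg hp) ∘ₗ
    (Submodule.Quotient.restrictScalarsEquiv R
      (Ideal.span (X '' s : Set (MvPolynomial σ R)))).symm.toLinearMap

theorem prod_X_dvd_monomial {s : Finset σ} {m : σ →₀ ℕ} (hm : ∀ i ∈ s, m i ≠ 0) (c : R) :
    ∏ i ∈ s, (X i : MvPolynomial σ R) ∣ monomial m c := by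
  classical
  rw [show ∏ i ∈ s, (X i : MvPolynomial σ R) = monomial (∑ i ∈ s, Finsupp.single i 1) 1 from
    (monomial_sum_one s _).symm, monomial_dvd_monomial]
  refine ⟨Or.inr fun j => ?_, one_dvd c⟩
  rw [Finsupp.finsetSum_apply]
  simp only [Finsupp.single_apply, Finset.sum_ite_eq']
  split_ifs with hj
  · exact Nat.one_le_iff_ne_zero.mpr (hm j hj)
  · exact Nat.zero_le _

theorem quotientSpanXLift_mk_monomial (s : Set σ) (g : (σ →₀ ℕ) → M)
    (hg : ∀ m, ∀ i ∈ s, m i ≠ 0 → g m = 0) (m : σ →₀ ℕ) (c : R) :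
    quotientSpanXLift s g hg (Ideal.Quotient.mk _ (monomial m c)) = c • g m :=
  basisMonomials_constr_monomial g m c

end MvPolynomial

section Signs

variable {d}

theorem sncSign_empty (j : Fin (d + 1)) : sncSign d ∅ j = 1 := by
  simp [sncSign]

theorem sncSign_mul_self (I : Finset (Fin (d + 1))) (j : Fin (d + 1)) :
    sncSign d I j * sncSign d I j = 1 := by
  rw [sncSign, ← pow_add, ← two_mul, pow_mul, neg_one_sq, one_pow]

theorem sncSign_insert {a : Fin (d + 1)} {I : Finset (Fin (d + 1))} (ha : a ∉ I)
    (j : Fin (d + 1)) :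
    sncSign d (insert a I) j = (if a < j then -1 else 1) * sncSign d I j := by
  unfold sncSign
  rw [Finset.filter_insert]
  split_ifs
  · rw [Finset.card_insert_of_notMem (fun h => ha (Finset.mem_filter.mp h).1), pow_succ, mul_comm]
  · rw [one_mul]

theorem sncSign_insert_mul_sncSign_insert {a b : Fin (d + 1)} {K : Finset (Fin (d + 1))}
    (ha : a ∉ K) (hb : b ∉ K) (hab : a ≠ b) :
    sncSign d (insert a K) b * sncSign d (insert b K) a = -(sncSign d K a * sncSign d K b) := by
  rw [sncSign_insert ha, sncSign_insert hb]
  rcases hab.lt_or_gt with h | h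
  · rw [if_pos h, if_neg h.asymm]; ring
  · rw [if_neg h.asymm, if_pos h]; ring

theorem sncSign_mul_sncSign_insert_add_comm {a b : Fin (d + 1)} {K : Finset (Fin (d + 1))}
    (ha : a ∉ K) (hb : b ∉ K) (hab : a ≠ b) :
    sncSign d K a * sncSign d (insert a K) b + sncSign d K b * sncSign d (insert b K) a = 0 := by
  rw [sncSign_insert ha, sncSign_insert hb]
  rcases hab.lt_or_gt with h | h
  · rw [if_pos h, if_neg h.asymm]; ring
  · rw [if_neg h.asymm, if_pos h]; ring

end Signs

section Families

variable {M N : Type*} [AddCommGroup M] [AddCommGroup N]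

/-- A family `e` stands for the generators `e J` of a complex indexed by subsets of `{0, ..., r}`;
`sncCoboundary d r e J` is the image of `e J` under the simplicial coboundary, and `sncCone d v e J`
its image under the cone contraction with apex `v`. -/
def sncCoboundary (e : Finset (Fin (d + 1)) → M) (J : Finset (Fin (d + 1))) : M :=
  ∑ j ∈ sncIdxSet d r \ J, sncSign d J j • e (insert j J)

def sncCone (v : Fin (d + 1)) (e : Finset (Fin (d + 1)) → M) (J : Finset (Fin (d + 1))) : M :=
  if v ∈ J then sncSign d (J.erase v) v • e (J.erase v) else 0

variable {d r}

theorem map_sncCoboundary {F : Type*} [FunLike F M N] [AddMonoidHomClass F M N] (φ : F)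
    (e : Finset (Fin (d + 1)) → M) (J : Finset (Fin (d + 1))) :
    φ (sncCoboundary d r e J) = sncCoboundary d r (fun K => φ (e K)) J := by
  simp only [sncCoboundary, map_sum, map_zsmul]

theorem map_sncCone {F : Type*} [FunLike F M N] [AddMonoidHomClass F M N] (φ : F)
    (v : Fin (d + 1)) (e : Finset (Fin (d + 1)) → M)
    (J : Finset (Fin (d + 1))) : φ (sncCone d v e J) = sncCone d v (fun K => φ (e K)) J := by
  unfold sncCone
  split_ifs <;> simp only [map_zsmul, map_zero]

theorem sncCoboundary_congr {e e' : Finset (Fin (d + 1)) → M} {J : Finset (Fin (d + 1))}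
    (h : ∀ j ∈ sncIdxSet d r \ J, e (insert j J) = e' (insert j J)) :
    sncCoboundary d r e J = sncCoboundary d r e' J :=
  Finset.sum_congr rfl fun j hj => by rw [h j hj]

theorem sncCone_of_notMem {v : Fin (d + 1)} (e : Finset (Fin (d + 1)) → M)
    {J : Finset (Fin (d + 1))} (hv : v ∉ J) : sncCone d v e J = 0 :=
  if_neg hv

theorem sncCoboundary_sncCoboundary (e : Finset (Fin (d + 1)) → M) (J : Finset (Fin (d + 1))) :
    sncCoboundary d r (sncCoboundary d r e) J = 0 := by
  unfold sncCoboundary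
  simp_rw [Finset.sdiff_insert, Finset.smul_sum, smul_smul]
  refine Finset.sum_sum_erase_eq_zero _ _ fun a ha b hb hab => ?_
  rw [Finset.insert_comm, ← add_smul, sncSign_mul_sncSign_insert_add_comm
    (Finset.mem_sdiff.mp ha).2 (Finset.mem_sdiff.mp hb).2 hab, zero_smul]

theorem sncCone_sncCoboundary_add {v : Fin (d + 1)} (hv : v ∈ sncIdxSet d r)
    (e : Finset (Fin (d + 1)) → M) (J : Finset (Fin (d + 1))) :
    sncCone d v (sncCoboundary d r e) J + sncCoboundary d r (sncCone d v e) J = e J := by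
  by_cases hvJ : v ∈ J
  · obtain ⟨K, hvK, rfl⟩ : ∃ K, v ∉ K ∧ J = insert v K :=
      ⟨J.erase v, Finset.notMem_erase v J, (Finset.insert_erase hvJ).symm⟩
    have hsplit : sncIdxSet d r \ K = insert v (sncIdxSet d r \ insert v K) := by
      rw [← Finset.sdiff_erase hv, Finset.erase_insert hvK]
    have hpair : ∀ j ∈ sncIdxSet d r \ insert v K,
        sncSign d K v • (sncSign d K j • e (insert j K)) +
          sncSign d (insert v K) j • sncCone d v e (insert j (insert v K)) = 0 := by
      intro j hj
      have hjvK : j ≠ v ∧ j ∉ K := by simpa using (Finset.mem_sdiff.mp hj).2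
      rw [sncCone, if_pos (by simp), Finset.erase_insert_of_ne hjvK.1, Finset.erase_insert hvK,
        smul_smul, smul_smul, ← add_smul,
        sncSign_insert_mul_sncSign_insert hvK hjvK.2 (Ne.symm hjvK.1), add_neg_cancel, zero_smul]
    rw [sncCone, if_pos (Finset.mem_insert_self v K), Finset.erase_insert hvK, sncCoboundary,
      hsplit, Finset.sum_insert (by simp), smul_add, smul_smul, sncSign_mul_self, one_smul,
      add_assoc, Finset.smul_sum, sncCoboundary, ← Finset.sum_add_distrib,
      Finset.sum_eq_zero hpair, add_zero]
  · rw [sncCone_of_notMem _ hvJ, zero_add, sncCoboundary,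
      Finset.sum_eq_single_of_mem v (Finset.mem_sdiff.mpr ⟨hv, hvJ⟩)]
    · rw [sncCone, if_pos (Finset.mem_insert_self v J), Finset.erase_insert hvJ, smul_smul,
        sncSign_mul_self, one_smul]
    · intro j _ hjv
      rw [sncCone_of_notMem _ (by simp [Ne.symm hjv, hvJ]), smul_zero]

end Families

section Complex

-- Lets `rw` see through the projections `I.1` of `I : sncIdx d r s` indexing the direct sums.
attribute [reducible] sncIdx

def sncStratumOf (s : ℕ) (J : Finset (Fin (d + 1))) :
    MvPolynomial (Fin (d + 1)) k →ₗ[k] sncComplexTerm k d r s :=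
  if h : J ⊆ sncIdxSet d r ∧ J.card = s + 1 then
    DirectSum.lof k (sncIdx d r s) (fun I => sncStratum k d I.1) (⟨J, h⟩ : sncIdx d r s) ∘ₗ
      (Ideal.Quotient.mkₐ k (sncIdeal k d J)).toLinearMap
  else 0

/-- The ring `A` is placed as the term of the complex indexed by `J = ∅`. -/
def sncTotalOf (J : Finset (Fin (d + 1))) : MvPolynomial (Fin (d + 1)) k →ₗ[k] sncTotal k d r :=
  if J = ∅ then (Ideal.Quotient.mkₐ k _).toLinearMap else 0

variable {k d r}

theorem sncIdx_insert {s : ℕ} {J : Finset (Fin (d + 1))} (hJ : J ⊆ sncIdxSet d r ∧ J.card = s)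
    {j : Fin (d + 1)} (hj : j ∈ sncIdxSet d r \ J) :
    insert j J ⊆ sncIdxSet d r ∧ (insert j J).card = s + 1 := by
  rw [Finset.mem_sdiff] at hj
  exact ⟨Finset.insert_subset hj.1 hJ.1, by rw [Finset.card_insert_of_notMem hj.2, hJ.2]⟩

theorem of_mk_eq_sncStratumOf {s : ℕ} {J : Finset (Fin (d + 1))}
    (hJ : J ⊆ sncIdxSet d r ∧ J.card = s + 1) (p : MvPolynomial (Fin (d + 1)) k) :
    DirectSum.of (fun I : sncIdx d r s => sncStratum k d I.1) (⟨J, hJ⟩ : sncIdx d r s)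
        (Ideal.Quotient.mk _ p) =
      sncStratumOf k d r s J p := by
  rw [sncStratumOf, dif_pos hJ]
  rfl

theorem sncStratumOf_insert_eq_zero {s : ℕ} {J : Finset (Fin (d + 1))}
    (hJ : ¬(J ⊆ sncIdxSet d r ∧ J.card = s)) {j : Fin (d + 1)} (hj : j ∉ J) :
    sncStratumOf k d r s (insert j J) = 0 := by
  rw [sncStratumOf, dif_neg]
  rintro ⟨hsub, hcard⟩
  rw [Finset.card_insert_of_notMem hj] at hcard
  exact hJ ⟨(Finset.subset_insert j J).trans hsub, by omega⟩

theorem sncStratumOf_monomial_eq_zero {s : ℕ} {J : Finset (Fin (d + 1))}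
    {m : Fin (d + 1) →₀ ℕ} {i : Fin (d + 1)} (hi : i ∈ J) (hmi : m i ≠ 0) (c : k) :
    sncStratumOf k d r s J (monomial m c) = 0 := by
  unfold sncStratumOf
  split_ifs
  · rw [LinearMap.comp_apply, AlgHom.toLinearMap_apply, Ideal.Quotient.mkₐ_eq_mk,
      Ideal.Quotient.eq_zero_iff_mem.mpr, map_zero]
    exact Ideal.mem_of_dvd _ (X_dvd_monomial.mpr (Or.inr hmi))
      (Ideal.subset_span (Set.mem_image_of_mem (fun i => X i) hi))
  · rfl

theorem sncDifferential_sncStratumOf (s : ℕ) (J : Finset (Fin (d + 1)))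
    (p : MvPolynomial (Fin (d + 1)) k) :
    sncDifferential k d r s (sncStratumOf k d r s J p) =
      sncCoboundary d r (fun K => sncStratumOf k d r (s + 1) K p) J := by
  by_cases hJ : J ⊆ sncIdxSet d r ∧ J.card = s + 1
  · rw [← of_mk_eq_sncStratumOf hJ, sncDifferential, DirectSum.toAddMonoid_of]
    refine (AddMonoidHom.finsetSum_apply _ _ _).trans ?_
    rw [sncCoboundary, ← Finset.sum_attach (sncIdxSet d r \ J)
      (fun j => sncSign d J j • sncStratumOf k d r (s + 1) (insert j J) p)]
    exact Finset.sum_congr rfl fun j _ =>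
      congrArg (sncSign d J j.1 • ·) (of_mk_eq_sncStratumOf (sncIdx_insert hJ j.2) p)
  · rw [sncStratumOf, dif_neg hJ, LinearMap.zero_apply, map_zero, sncCoboundary,
      Finset.sum_eq_zero]
    intro j hj
    rw [sncStratumOf_insert_eq_zero hJ (Finset.mem_sdiff.mp hj).2, LinearMap.zero_apply,
      smul_zero]

theorem sncTotalOf_empty (p : MvPolynomial (Fin (d + 1)) k) :
    sncTotalOf k d r ∅ p = Ideal.Quotient.mk _ p := by
  rw [sncTotalOf, if_pos rfl]
  rfl

theorem sncAugmentation_mk (p : MvPolynomial (Fin (d + 1)) k) :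
    sncAugmentation k d r (Ideal.Quotient.mk _ p) =
      ∑ i ∈ sncIdxSet d r, sncStratumOf k d r 0 {i} p := by
  rw [sncAugmentation, AddMonoidHom.finsetSum_apply,
    ← Finset.sum_attach (sncIdxSet d r) (fun i => sncStratumOf k d r 0 {i} p)]
  refine Finset.sum_congr rfl fun i _ => ?_
  rw [AddMonoidHom.comp_apply, RingHom.toAddMonoidHom_eq_coe]
  exact of_mk_eq_sncStratumOf _ p

theorem sncAugmentation_sncTotalOf (J : Finset (Fin (d + 1))) (p : MvPolynomial (Fin (d + 1)) k) :
    sncAugmentation k d r (sncTotalOf k d r J p) =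
      sncCoboundary d r (fun K => sncStratumOf k d r 0 K p) J := by
  by_cases hJ : J = ∅
  · subst hJ
    rw [sncTotalOf_empty, sncAugmentation_mk, sncCoboundary, Finset.sdiff_empty]
    exact Finset.sum_congr rfl fun i _ => by rw [sncSign_empty, one_smul, Finset.insert_empty]
  · rw [sncTotalOf, if_neg hJ, LinearMap.zero_apply, map_zero, sncCoboundary, Finset.sum_eq_zero]
    intro j hj
    rw [sncStratumOf_insert_eq_zero (by simp [hJ]) (Finset.mem_sdiff.mp hj).2,
      LinearMap.zero_apply, smul_zero]

theorem sncTotalOf_monomial_eq_zero {m : Fin (d + 1) →₀ ℕ}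
    (hm : ∀ i ∈ sncIdxSet d r, m i ≠ 0)
    (J : Finset (Fin (d + 1))) (c : k) : sncTotalOf k d r J (monomial m c) = 0 := by
  unfold sncTotalOf
  split_ifs
  · rw [AlgHom.toLinearMap_apply, Ideal.Quotient.mkₐ_eq_mk, Ideal.Quotient.eq_zero_iff_mem,
      Ideal.mem_span_singleton]
    exact prod_X_dvd_monomial hm c
  · rfl

end Complex

section Homotopy

/-- The apex of the cone contracting the monomial `x^m`: an index `i ≤ r` with `m i = 0`, or the
junk value `0` when there is none, in which case `x^m` vanishes in every term of the complex. -/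
def sncConeVertex (m : Fin (d + 1) →₀ ℕ) : Fin (d + 1) :=
  if h : ∃ i ∈ sncIdxSet d r, m i = 0 then h.choose else 0

variable {k d r}

theorem sncConeVertex_mem (m : Fin (d + 1) →₀ ℕ) : sncConeVertex d r m ∈ sncIdxSet d r := by
  unfold sncConeVertex
  split_ifs with h
  · exact h.choose_spec.1
  · simp [sncIdxSet]

theorem apply_sncConeVertex_eq_zero {m : Fin (d + 1) →₀ ℕ} {i : Fin (d + 1)}
    (hi : i ∈ sncIdxSet d r) (hmi : m i = 0) : m (sncConeVertex d r m) = 0 := by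
  have h : ∃ i ∈ sncIdxSet d r, m i = 0 := ⟨i, hi, hmi⟩
  rw [sncConeVertex, dif_pos h]
  exact h.choose_spec.2

variable (k d r) in
def sncHomotopyOf {M : Type*} [AddCommGroup M] [Module k M] (s : ℕ)
    (φ : Finset (Fin (d + 1)) → MvPolynomial (Fin (d + 1)) k →ₗ[k] M)
    (hφ : ∀ (I : sncIdx d r s) (m : Fin (d + 1) →₀ ℕ), ∀ i ∈ I.1, m i ≠ 0 →
      sncCone d (sncConeVertex d r m) (fun K => φ K (monomial m 1)) I.1 = 0) :
    sncComplexTerm k d r s →ₗ[k] M :=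
  DirectSum.toModule k _ _ fun I => quotientSpanXLift (I.1 : Set (Fin (d + 1)))
    (fun m => sncCone d (sncConeVertex d r m) (fun K => φ K (monomial m 1)) I.1) (hφ I)

theorem sncHomotopyOf_sncStratumOf_monomial {M : Type*} [AddCommGroup M] [Module k M] {s : ℕ}
    {φ : Finset (Fin (d + 1)) → MvPolynomial (Fin (d + 1)) k →ₗ[k] M} {hφ}
    {J : Finset (Fin (d + 1))} (hJ : J ⊆ sncIdxSet d r ∧ J.card = s + 1)
    (m : Fin (d + 1) →₀ ℕ) (c : k) :
    sncHomotopyOf k d r s φ hφ (sncStratumOf k d r s J (monomial m c)) =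
      sncCone d (sncConeVertex d r m) (fun K => φ K (monomial m c)) J := by
  rw [← of_mk_eq_sncStratumOf hJ, sncHomotopyOf, ← DirectSum.lof_eq_of k]
  refine (DirectSum.toModule_lof k _ _).trans ?_
  refine (quotientSpanXLift_mk_monomial _ _ _ m c).trans ?_
  rw [← DistribMulAction.toAddMonoidHom_apply, map_sncCone]
  simp only [DistribMulAction.toAddMonoidHom_apply, ← map_smul, smul_eq_mul, mul_one]

theorem sncCone_sncStratumOf_monomial_eq_zero {s : ℕ} (I : sncIdx d r (s + 1))
    {m : Fin (d + 1) →₀ ℕ} {i : Fin (d + 1)} (hi : i ∈ I.1) (hmi : m i ≠ 0) :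
    sncCone d (sncConeVertex d r m) (fun K => sncStratumOf k d r s K (monomial m 1)) I.1 = 0 := by
  set v := sncConeVertex d r m
  suffices h : ∃ j ∈ I.1.erase v, m j ≠ 0 by
    obtain ⟨j, hj, hmj⟩ := h
    rw [sncCone]
    split_ifs
    · rw [sncStratumOf_monomial_eq_zero hj hmj, smul_zero]
    · rfl
  by_cases hiv : i = v
  · obtain ⟨j, hj⟩ : (I.1.erase v).Nonempty := by
      rw [← Finset.card_pos, Finset.card_erase_of_mem (hiv ▸ hi), I.2.2]
      omega
    refine ⟨j, hj, fun hmj => hmi ?_⟩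
    rw [hiv]
    exact apply_sncConeVertex_eq_zero (I.2.1 (Finset.mem_of_mem_erase hj)) hmj
  · exact ⟨i, Finset.mem_erase.mpr ⟨hiv, hi⟩, hmi⟩

theorem sncCone_sncTotalOf_monomial_eq_zero (I : sncIdx d r 0) {m : Fin (d + 1) →₀ ℕ}
    {i : Fin (d + 1)} (hi : i ∈ I.1) (hmi : m i ≠ 0) :
    sncCone d (sncConeVertex d r m) (fun K => sncTotalOf k d r K (monomial m 1)) I.1 = 0 := by
  rw [sncCone]
  split_ifs with hv
  · have hiv : i = sncConeVertex d r m := Finset.card_le_one.mp I.2.2.le i hi _ hv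
    have hm : ∀ j ∈ sncIdxSet d r, m j ≠ 0 := fun j hj hmj =>
      hmi (hiv ▸ apply_sncConeVertex_eq_zero hj hmj)
    rw [sncTotalOf_monomial_eq_zero hm, smul_zero]
  · rfl

variable (k d r)

def sncHomotopy (s : ℕ) : sncComplexTerm k d r (s + 1) →ₗ[k] sncComplexTerm k d r s :=
  sncHomotopyOf k d r (M := sncComplexTerm k d r s) (s + 1) (sncStratumOf k d r s)
    fun I _ _ hi hmi => sncCone_sncStratumOf_monomial_eq_zero I hi hmi

def sncAugHomotopy : sncComplexTerm k d r 0 →ₗ[k] sncTotal k d r :=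
  sncHomotopyOf k d r (M := sncTotal k d r) 0 (sncTotalOf k d r) fun I _ _ hi hmi =>
    sncCone_sncTotalOf_monomial_eq_zero I hi hmi

variable {k d r}

theorem sncHomotopy_sncStratumOf_monomial {s : ℕ} {J : Finset (Fin (d + 1))}
    (hJ : J ⊆ sncIdxSet d r ∧ J.card = s + 1 + 1) (m : Fin (d + 1) →₀ ℕ) (c : k) :
    sncHomotopy k d r s (sncStratumOf k d r (s + 1) J (monomial m c)) =
      sncCone d (sncConeVertex d r m) (fun K => sncStratumOf k d r s K (monomial m c)) J :=
  sncHomotopyOf_sncStratumOf_monomial hJ m c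

theorem sncAugHomotopy_sncStratumOf_monomial {J : Finset (Fin (d + 1))}
    (hJ : J ⊆ sncIdxSet d r ∧ J.card = 0 + 1) (m : Fin (d + 1) →₀ ℕ) (c : k) :
    sncAugHomotopy k d r (sncStratumOf k d r 0 J (monomial m c)) =
      sncCone d (sncConeVertex d r m) (fun K => sncTotalOf k d r K (monomial m c)) J :=
  sncHomotopyOf_sncStratumOf_monomial hJ m c

end Homotopy

section Identities

variable {k d r}

theorem sncComplexTerm_addHom_ext {M : Type*} [AddMonoid M] {s : ℕ}
    {f g : sncComplexTerm k d r s →+ M}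
    (h : ∀ (I : sncIdx d r s) (m : Fin (d + 1) →₀ ℕ) (c : k),
      f (sncStratumOf k d r s I.1 (monomial m c)) = g (sncStratumOf k d r s I.1 (monomial m c))) :
    f = g := by
  refine DirectSum.addHom_ext fun I x => ?_
  obtain ⟨p, rfl⟩ := Ideal.Quotient.mk_surjective x
  induction p using MvPolynomial.induction_on' with
  | monomial m c => rw [of_mk_eq_sncStratumOf I.2]; exact h I m c
  | add p q hp hq => rw [map_add, map_add, map_add, hp, hq, map_add]

theorem sncTotal_addHom_ext {M : Type*} [AddMonoid M] {f g : sncTotal k d r →+ M}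
    (h : ∀ (m : Fin (d + 1) →₀ ℕ) (c : k),
      f (Ideal.Quotient.mk _ (monomial m c)) = g (Ideal.Quotient.mk _ (monomial m c))) :
    f = g := by
  ext x
  obtain ⟨p, rfl⟩ := Ideal.Quotient.mk_surjective x
  induction p using MvPolynomial.induction_on' with
  | monomial m c => exact h m c
  | add p q hp hq => rw [map_add, map_add, hp, hq, map_add]

theorem sncDifferential_sncDifferential (s : ℕ) (x : sncComplexTerm k d r s) :
    sncDifferential k d r (s + 1) (sncDifferential k d r s x) = 0 := by
  refine DFunLike.congr_fun (sncComplexTerm_addHom_ext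
    (f := (sncDifferential k d r (s + 1)).comp (sncDifferential k d r s)) (g := 0)
    fun I m c => ?_) x
  simp only [AddMonoidHom.comp_apply, AddMonoidHom.zero_apply]
  simp_rw [sncDifferential_sncStratumOf, map_sncCoboundary, sncDifferential_sncStratumOf]
  exact sncCoboundary_sncCoboundary _ _

theorem sncDifferential_sncAugmentation (x : sncTotal k d r) :
    sncDifferential k d r 0 (sncAugmentation k d r x) = 0 := by
  refine DFunLike.congr_fun (sncTotal_addHom_ext
    (f := (sncDifferential k d r 0).comp (sncAugmentation k d r)) (g := 0)
    fun m c => ?_) x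
  simp only [AddMonoidHom.comp_apply, AddMonoidHom.zero_apply]
  simp_rw [← sncTotalOf_empty, sncAugmentation_sncTotalOf, map_sncCoboundary,
    sncDifferential_sncStratumOf]
  exact sncCoboundary_sncCoboundary _ _

theorem sncAugHomotopy_sncAugmentation (x : sncTotal k d r) :
    sncAugHomotopy k d r (sncAugmentation k d r x) = x := by
  refine DFunLike.congr_fun (sncTotal_addHom_ext
    (f := (sncAugHomotopy k d r).toAddMonoidHom.comp (sncAugmentation k d r)) (g := .id _)
    fun m c => ?_) x
  simp only [AddMonoidHom.comp_apply, AddMonoidHom.id_apply, LinearMap.toAddMonoidHom_coe]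
  have hcone := sncCone_sncCoboundary_add (sncConeVertex_mem (r := r) m)
    (fun K => sncTotalOf k d r K (monomial m c)) ∅
  rw [sncCone_of_notMem _ (Finset.notMem_empty _), zero_add, sncTotalOf_empty] at hcone
  rw [← sncTotalOf_empty, sncAugmentation_sncTotalOf, map_sncCoboundary,
    sncCoboundary_congr fun j hj => sncAugHomotopy_sncStratumOf_monomial
      (sncIdx_insert ⟨Finset.empty_subset _, Finset.card_empty⟩ hj) m c]
  exact hcone

theorem sncAugmentation_sncAugHomotopy_add (y : sncComplexTerm k d r 0) :
    sncAugmentation k d r (sncAugHomotopy k d r y) +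
      sncHomotopy k d r 0 (sncDifferential k d r 0 y) = y := by
  refine DFunLike.congr_fun (sncComplexTerm_addHom_ext
    (f := (sncAugmentation k d r).comp (sncAugHomotopy k d r).toAddMonoidHom +
      (sncHomotopy k d r 0).toAddMonoidHom.comp (sncDifferential k d r 0)) (g := .id _)
    fun I m c => ?_) y
  simp only [AddMonoidHom.add_apply, AddMonoidHom.comp_apply, AddMonoidHom.id_apply,
    LinearMap.toAddMonoidHom_coe]
  rw [sncAugHomotopy_sncStratumOf_monomial I.2, map_sncCone, sncDifferential_sncStratumOf,
    map_sncCoboundary]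
  simp_rw [sncAugmentation_sncTotalOf]
  rw [sncCoboundary_congr fun j hj => sncHomotopy_sncStratumOf_monomial (sncIdx_insert I.2 hj) m c]
  exact sncCone_sncCoboundary_add (sncConeVertex_mem m) _ _

theorem sncDifferential_sncHomotopy_add (s : ℕ) (y : sncComplexTerm k d r (s + 1)) :
    sncDifferential k d r s (sncHomotopy k d r s y) +
      sncHomotopy k d r (s + 1) (sncDifferential k d r (s + 1) y) = y := by
  refine DFunLike.congr_fun (sncComplexTerm_addHom_ext
    (f := (sncDifferential k d r s).comp (sncHomotopy k d r s).toAddMonoidHom +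
      (sncHomotopy k d r (s + 1)).toAddMonoidHom.comp (sncDifferential k d r (s + 1))) (g := .id _)
    fun I m c => ?_) y
  simp only [AddMonoidHom.add_apply, AddMonoidHom.comp_apply, AddMonoidHom.id_apply,
    LinearMap.toAddMonoidHom_coe]
  rw [sncHomotopy_sncStratumOf_monomial I.2, map_sncCone, sncDifferential_sncStratumOf,
    map_sncCoboundary]
  simp_rw [sncDifferential_sncStratumOf]
  rw [sncCoboundary_congr fun j hj => sncHomotopy_sncStratumOf_monomial (sncIdx_insert I.2 hj) m c]
  exact sncCone_sncCoboundary_add (sncConeVertex_mem m) _ _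

end Identities

theorem snc_cech_complex_exact :
    Function.Injective (sncAugmentation k d r) ∧
    Function.Exact (sncAugmentation k d r) (sncDifferential k d r 0) ∧
    ∀ s : ℕ, Function.Exact (sncDifferential k d r s) (sncDifferential k d r (s + 1)) :=
  ⟨Function.LeftInverse.injective (sncAugHomotopy_sncAugmentation (k := k) (d := d) (r := r)),
    .of_homotopy sncDifferential_sncAugmentation (sncAugHomotopy k d r) (sncHomotopy k d r 0)
      (map_zero _) sncAugmentation_sncAugHomotopy_add,
    fun s => .of_homotopy (sncDifferential_sncDifferential s) (sncHomotopy k d r s)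
      (sncHomotopy k d r (s + 1)) (map_zero _) (sncDifferential_sncHomotopy_add s)⟩

end
end
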